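/- The hull operation is idempotent: for any finite simple graph X, Hull(Hull(X)) = Hull(X). -/

import Mathlib

def kerGraph {Ω : Type*} (S : Set (Ω → Ω)) : SimpleGraph Ω where
  Adj v w := v ≠ w ∧ ∀ f ∈ S, f v ≠ f w
  symm := ⟨fun v w h => ⟨h.1.symm, fun f hf => (h.2 f hf).symm⟩⟩
  loopless := ⟨fun v h => h.1 rfl⟩

/-- `f` is an endomorphism of the simple graph `X`. -/
def isEnd {V : Type*} (X : SimpleGraph V) (f : V → V) : Prop :=
  ∀ v w, X.Adj v w → X.Adj (f v) (f w)

/-- The hull of a graph: the kernel graph of its endomorphism monoid. -/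
def hull {V : Type*} (X : SimpleGraph V) : SimpleGraph V :=
  kerGraph {f | isEnd X f}

/-!
Every graph lies below its hull, since an endomorphism maps edges to edges and so never
identifies their ends; applied to `Hull X` this gives `Hull X ≤ Hull (Hull X)`. Conversely
every endomorphism `f` of `X` is one of `Hull X`: if `f` or `g ∘ f` with `g ∈ End X` identified
the ends of a hull edge, it would contradict that edge. A larger monoid has a smaller kernel
graph, so `Hull (Hull X) ≤ Hull X`.
-/

lemma kerGraph_anti {Ω : Type*} {S T : Set (Ω → Ω)} (hST : S ⊆ T) :
    kerGraph T ≤ kerGraph S :=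
  fun _ _ h => ⟨h.1, fun f hf => h.2 f (hST hf)⟩

lemma isEnd.comp {V : Type*} {X : SimpleGraph V} {f g : V → V} (hg : isEnd X g)
    (hf : isEnd X f) : isEnd X (g ∘ f) :=
  fun _ _ h => hg _ _ (hf _ _ h)

lemma le_hull {V : Type*} (X : SimpleGraph V) : X ≤ hull X :=
  fun _ _ h => ⟨X.ne_of_adj h, fun _ hf => X.ne_of_adj (hf _ _ h)⟩

lemma isEnd.hull {V : Type*} {X : SimpleGraph V} {f : V → V} (hf : isEnd X f) :
    isEnd (hull X) f :=
  fun _ _ h => ⟨h.2 f hf, fun g hg => h.2 (g ∘ f) (hg.comp hf)⟩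

theorem stmt6_general {V : Type*} (X : SimpleGraph V) :
    hull (hull X) = hull X :=
  le_antisymm (kerGraph_anti fun _ => isEnd.hull) (le_hull (hull X))

/-- the hull operation is idempotent. -/
theorem stmt6 {V : Type*} [Fintype V] (X : SimpleGraph V) :
    hull (hull X) = hull X :=
  stmt6_general X
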